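/- arXiv:1312.3291 — 5 statements merged into one kernel-verified Lean document; each statement's English description precedes it below -/
import Mathlib

section
/- For a submodular function F : 2^[p] → ℝ with F(∅) = 0 and its Lovász extension f : [0,1]^p → ℝ, the minimum of F over {0,1}^p equals the minimum of f over [0,1]^p. -/
/-- The Lovász extension of `F : 2^[p] → ℝ`, defined via the sorted-coordinates formula:
sort coordinates of `x` in decreasing order `x_{j_1} ≥ … ≥ x_{j_p}` and set
`f(x) = Σ_i x_{j_i} (F({j_1,…,j_i}) − F({j_1,…,j_{i−1}}))`. -/
noncomputable def lovasz {p : ℕ} (F : Finset (Fin p) → ℝ) (x : Fin p → ℝ) : ℝ :=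
  let σ := Tuple.sort (fun j => -x j)
  ∑ i : Fin p, x (σ i) * (F ((Finset.Iic i).image σ) - F ((Finset.Iio i).image σ))


namespace LovaszAux

variable {p : ℕ}

noncomputable def sig (x : Fin p → ℝ) : Equiv.Perm (Fin p) := Tuple.sort (fun j => -x j)

noncomputable def aext (x : Fin p → ℝ) (n : ℕ) : ℝ :=
  if h : n < p then x (sig x ⟨n, h⟩) else 0

noncomputable def Tset (x : Fin p → ℝ) (n : ℕ) : Finset (Fin p) :=
  (Finset.univ.filter fun j : Fin p => (j : ℕ) < n).image (sig x)

lemma aext_antitone (x : Fin p → ℝ) (hx0 : 0 ≤ x) {n : ℕ} (hn : n < p) :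
    aext x (n + 1) ≤ aext x n := by
  by_cases h : n + 1 < p
  · have hm := Tuple.monotone_sort (fun j => -x j)
    have : (fun j => -x j) ((sig x) ⟨n, hn⟩) ≤ (fun j => -x j) ((sig x) ⟨n+1, h⟩) := by
      have := hm (a := ⟨n, hn⟩) (b := ⟨n+1, h⟩) (by simp [Fin.le_def])
      simpa [sig] using this
    simp only [aext, dif_pos hn, dif_pos h]
    simp only [Function.comp] at this
    linarith [this]
  · simp only [aext, dif_pos hn, dif_neg h]
    exact hx0 _

lemma Tset_zero (x : Fin p → ℝ) : Tset x 0 = ∅ := by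
  simp [Tset]

lemma lovasz_eq (F : Finset (Fin p) → ℝ) (h0 : F ∅ = 0) (x : Fin p → ℝ) :
    lovasz F x = ∑ n ∈ Finset.range p, (aext x n - aext x (n + 1)) * F (Tset x (n + 1)) := by
  have hIic : ∀ i : Fin p, (Finset.Iic i).image (sig x) = Tset x (i + 1) := by
    intro i
    unfold Tset
    congr 1
    ext j
    simp only [Finset.mem_Iic, Finset.mem_filter, Finset.mem_univ, true_and, Fin.le_def,
      Nat.lt_succ_iff]
  have hIio : ∀ i : Fin p, (Finset.Iio i).image (sig x) = Tset x i := by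
    intro i
    unfold Tset
    congr 1
    ext j
    simp only [Finset.mem_Iio, Finset.mem_filter, Finset.mem_univ, true_and, Fin.lt_def]
  have h1 : lovasz F x
      = ∑ n ∈ Finset.range p, aext x n * (F (Tset x (n + 1)) - F (Tset x n)) := by
    have h1' : ∀ i : Fin p,
        x (sig x i) * (F ((Finset.Iic i).image (sig x)) - F ((Finset.Iio i).image (sig x)))
          = aext x i * (F (Tset x (i + 1)) - F (Tset x i)) := by
      intro i
      rw [hIic i, hIio i]
      congr 1
      simp [aext, i.isLt]
    show (∑ i : Fin p, x (sig x i) *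
        (F ((Finset.Iic i).image (sig x)) - F ((Finset.Iio i).image (sig x)))) = _
    rw [Finset.sum_congr rfl fun i _ => h1' i,
      Fin.sum_univ_eq_sum_range (fun n => aext x n * (F (Tset x (n + 1)) - F (Tset x n)))]
  rw [h1, ← sub_eq_zero, ← Finset.sum_sub_distrib]
  have h2 : ∀ n ∈ Finset.range p,
      aext x n * (F (Tset x (n + 1)) - F (Tset x n))
        - (aext x n - aext x (n + 1)) * F (Tset x (n + 1))
      = aext x (n+1) * F (Tset x (n+1)) - aext x n * F (Tset x n) := by
    intro n _; ring
  rw [Finset.sum_congr rfl h2, Finset.sum_range_sub (fun n => aext x n * F (Tset x n))]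
  have hp0 : aext x p = 0 := by simp [aext]
  rw [hp0, Tset_zero, h0]
  ring

end LovaszAux

namespace LovaszAux

variable {p : ℕ}

lemma aext_nonneg (x : Fin p → ℝ) (hx0 : 0 ≤ x) (n : ℕ) : 0 ≤ aext x n := by
  unfold aext; split
  · exact hx0 _
  · exact le_refl 0

lemma card_le (A : Finset (Fin p)) : A.card ≤ p := by
  simpa using Finset.card_le_univ A

lemma lovasz_ge (F : Finset (Fin p) → ℝ) (h0 : F ∅ = 0) (hp : 1 ≤ p)
    (A₀ : Finset (Fin p)) (hmin : ∀ B : Finset (Fin p), F A₀ ≤ F B)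
    (x : Fin p → ℝ) (hx0 : 0 ≤ x) (hx1 : x ≤ 1) : F A₀ ≤ lovasz F x := by
  set m := F A₀ with hm
  have hm0 : m ≤ 0 := h0 ▸ hmin ∅
  rw [lovasz_eq F h0 x]
  have hc : ∀ n ∈ Finset.range p, 0 ≤ aext x n - aext x (n + 1) := by
    intro n hn
    have := aext_antitone x hx0 (Finset.mem_range.mp hn)
    linarith
  have step1 : ∑ n ∈ Finset.range p, (aext x n - aext x (n + 1)) * m
      ≤ ∑ n ∈ Finset.range p, (aext x n - aext x (n + 1)) * F (Tset x (n + 1)) := by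
    refine Finset.sum_le_sum fun n hn => ?_
    exact mul_le_mul_of_nonneg_left (hmin _) (hc n hn)
  have step2 : ∑ n ∈ Finset.range p, (aext x n - aext x (n + 1)) * m
      = aext x 0 * m := by
    rw [← Finset.sum_mul]
    congr 1
    have := Finset.sum_range_sub (fun n => aext x n) p
    have hsum : ∑ n ∈ Finset.range p, (aext x n - aext x (n + 1))
        = -∑ n ∈ Finset.range p, (aext x (n + 1) - aext x n) := by
      rw [← Finset.sum_neg_distrib]
      exact Finset.sum_congr rfl fun n _ => by ring
    rw [hsum, this]
    simp [aext]
  have ha0 : aext x 0 ≤ 1 := by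
    have h0p : 0 < p := hp
    simp only [aext, dif_pos h0p]
    exact hx1 _
  have ha0' : 0 ≤ aext x 0 := aext_nonneg x hx0 0
  nlinarith [step1, step2]

lemma lovasz_indicator (F : Finset (Fin p) → ℝ) (h0 : F ∅ = 0) (A : Finset (Fin p)) :
    lovasz F (fun j => if j ∈ A then (1 : ℝ) else 0) = F A := by
  set x : Fin p → ℝ := fun j => if j ∈ A then (1 : ℝ) else 0 with hxdef
  set k := A.card with hk
  have hkp : k ≤ p := card_le A
  -- the filtered preimage set
  have hs : (Finset.univ.filter fun i : Fin p => sig x i ∈ A)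
      = A.image (sig x).symm := by
    ext i
    simp only [Finset.mem_filter, Finset.mem_univ, true_and, Finset.mem_image]
    constructor
    · intro h; exact ⟨sig x i, h, by simp⟩
    · rintro ⟨j, hj, rfl⟩; simpa using hj
  have hscard : (Finset.univ.filter fun i : Fin p => sig x i ∈ A).card = k := by
    rw [hs, Finset.card_image_of_injective _ (sig x).symm.injective]
  have hdown : ∀ i j : Fin p, i ≤ j → sig x j ∈ A → sig x i ∈ A := by
    intro i j hij hj
    by_contra hi
    have hm := Tuple.monotone_sort (fun j => -x j) hij
    simp only [Function.comp, sig] at hm ⊢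
    have h1 : x ((Tuple.sort fun j => -x j) j) = 1 := by
      simp only [hxdef]; rw [if_pos]; exact hj
    have h2 : x ((Tuple.sort fun j => -x j) i) = 0 := by
      simp only [hxdef]; rw [if_neg]; exact hi
    rw [h1, h2] at hm
    linarith
  have hmem : ∀ i : Fin p, sig x i ∈ A ↔ (i : ℕ) < k := by
    intro i
    constructor
    · intro hi
      have hsub : Finset.Iic i ⊆ Finset.univ.filter fun j : Fin p => sig x j ∈ A := by
        intro j hj
        simp only [Finset.mem_filter, Finset.mem_univ, true_and]
        exact hdown j i (Finset.mem_Iic.mp hj) hi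
      have := Finset.card_le_card hsub
      rw [hscard, Fin.card_Iic] at this
      omega
    · intro hik
      by_contra hi
      have hsub : (Finset.univ.filter fun j : Fin p => sig x j ∈ A) ⊆ Finset.Iio i := by
        intro j hj
        simp only [Finset.mem_filter, Finset.mem_univ, true_and] at hj
        rw [Finset.mem_Iio]
        by_contra hji
        exact hi (hdown i j (le_of_not_gt hji) hj)
      have := Finset.card_le_card hsub
      rw [hscard, Fin.card_Iio] at this
      omega
  have haext : ∀ n : ℕ, aext x n = if n < k then 1 else 0 := by
    intro n
    unfold aext
    split
    · next h =>
      have := hmem ⟨n, h⟩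
      simp only [hxdef]
      by_cases hnk : n < k
      · rw [if_pos (this.mpr hnk), if_pos hnk]
      · rw [if_neg (fun hh => hnk (this.mp hh)), if_neg hnk]
    · next h => rw [if_neg (by omega)]
  have hT : Tset x k = A := by
    ext j
    simp only [Tset, Finset.mem_image, Finset.mem_filter, Finset.mem_univ, true_and]
    constructor
    · rintro ⟨i, hi, rfl⟩; exact (hmem i).mpr hi
    · intro hj
      exact ⟨(sig x).symm j, by rw [← hmem ((sig x).symm j)]; simpa using hj, by simp⟩
  rw [lovasz_eq F h0 x]
  rcases Nat.eq_zero_or_pos k with hk0 | hkpos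
  · have hA : A = ∅ := Finset.card_eq_zero.mp (hk.symm.trans hk0)
    rw [hA, h0, Finset.sum_eq_zero]
    intro n _
    rw [haext n, haext (n + 1), if_neg (by omega), if_neg (by omega)]
    ring
  · obtain ⟨k', hk'⟩ : ∃ k', k = k' + 1 := ⟨k - 1, by omega⟩
    rw [Finset.sum_eq_single k']
    · rw [haext k', haext (k' + 1), if_pos (show k' < k by omega),
        if_neg (show ¬ (k' + 1 < k) by omega), show k' + 1 = k from hk'.symm, hT]
      ring
    · intro n _ hn
      rw [haext n, haext (n + 1)]
      rcases lt_or_ge n k' with h | h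
      · rw [if_pos (show n < k by omega), if_pos (show n + 1 < k by omega)]; ring
      · rw [if_neg (show ¬ n < k by omega), if_neg (show ¬ n + 1 < k by omega)]; ring
    · intro h
      exact absurd (Finset.mem_range.mpr (by omega)) h

end LovaszAux


/-- For submodular `F` with `F ∅ = 0`, the minimum of `F` over `{0,1}^p`
equals the minimum of its Lovász extension over `[0,1]^p`. -/
theorem lovasz_min_eq {p : ℕ} (hp : 1 ≤ p) (F : Finset (Fin p) → ℝ)
    (hsub : ∀ A B : Finset (Fin p), F (A ∩ B) + F (A ∪ B) ≤ F A + F B)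
    (h0 : F ∅ = 0) :
    sInf {y : ℝ | ∃ A : Finset (Fin p), F A = y}
      = sInf {y : ℝ | ∃ x ∈ Set.Icc (0 : Fin p → ℝ) 1, lovasz F x = y} := by
  classical
  obtain ⟨A₀, -, hmin'⟩ := Finset.exists_min_image (Finset.univ : Finset (Finset (Fin p))) F
    ⟨∅, Finset.mem_univ ∅⟩
  have hmin : ∀ B : Finset (Fin p), F A₀ ≤ F B := fun B => hmin' B (Finset.mem_univ B)
  set S1 := {y : ℝ | ∃ A : Finset (Fin p), F A = y}
  set S2 := {y : ℝ | ∃ x ∈ Set.Icc (0 : Fin p → ℝ) 1, lovasz F x = y}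
  have hindmem : ∀ A : Finset (Fin p),
      (fun j => if j ∈ A then (1 : ℝ) else 0) ∈ Set.Icc (0 : Fin p → ℝ) 1 := by
    intro A
    constructor
    · intro j; dsimp; split <;> norm_num
    · intro j; dsimp; split <;> norm_num
  have hFS2 : ∀ A : Finset (Fin p), F A ∈ S2 := fun A =>
    ⟨_, hindmem A, LovaszAux.lovasz_indicator F h0 A⟩
  have hlb2 : ∀ y ∈ S2, F A₀ ≤ y := by
    rintro y ⟨x, ⟨hx0, hx1⟩, rfl⟩
    exact LovaszAux.lovasz_ge F h0 hp A₀ hmin x hx0 hx1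
  have hlb1 : ∀ y ∈ S1, F A₀ ≤ y := by
    rintro y ⟨A, rfl⟩; exact hmin A
  have hne1 : S1.Nonempty := ⟨F ∅, ∅, rfl⟩
  have hne2 : S2.Nonempty := ⟨F ∅, hFS2 ∅⟩
  apply le_antisymm
  · refine le_csInf hne2 fun y hy => ?_
    exact le_trans (csInf_le ⟨F A₀, hlb1⟩ ⟨A₀, rfl⟩) (hlb2 y hy)
  · refine le_csInf hne1 fun y hy => ?_
    obtain ⟨A, rfl⟩ := hy
    exact csInf_le ⟨F A₀, hlb2⟩ (hFS2 A)
end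

section
/- The Lovász extension of a submodular function is convex on [0,1]^p. -/
/-!
For every ordering `σ` of the ground set, the greedy vector `w_σ` (marginal gains of `F` along `σ`)
satisfies `w_σ(A) ≤ F A - F ∅` for all `A`, with equality on the prefixes of `σ`; this is where
submodularity enters. Abel summation along the ordering `τ` that sorts `x` then shows that
`x ↦ ⟪x, w_σ⟫` is maximised over `σ` at `σ = τ`, where it equals `lovasz F x`. So `lovasz F` is a
pointwise maximum of linear functions, hence convex on all of `ℝ^p`.
-/

open Finset

namespace Lovasz

def IsSubmodular {α : Type*} [DecidableEq α] (F : Finset α → ℝ) : Prop :=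
  ∀ A B : Finset α, F (A ∩ B) + F (A ∪ B) ≤ F A + F B

lemma IsSubmodular.sub_le_sub_of_subset {α : Type*} [DecidableEq α] {F : Finset α → ℝ}
    (hF : IsSubmodular F) {B C : Finset α} {j : α} (hBC : B ⊆ C) (hj : j ∉ C) :
    F (insert j C) - F C ≤ F (insert j B) - F B := by
  have hinter : insert j B ∩ C = B := by
    rw [insert_inter_of_notMem hj, inter_eq_left.2 hBC]
  have hunion : insert j B ∪ C = insert j C := by
    rw [insert_union, union_eq_right.2 hBC]
  have := hF (insert j B) C
  rw [hinter, hunion] at this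
  linarith

variable {p : ℕ}

def prefixSet (σ : Equiv.Perm (Fin p)) (n : ℕ) : Finset (Fin p) :=
  univ.filter fun j => (σ.symm j : ℕ) < n

@[simp]
lemma mem_prefixSet {σ : Equiv.Perm (Fin p)} {n : ℕ} {j : Fin p} :
    j ∈ prefixSet σ n ↔ (σ.symm j : ℕ) < n := by
  simp [prefixSet]

lemma prefixSet_zero (σ : Equiv.Perm (Fin p)) : prefixSet σ 0 = ∅ := by
  ext; simp

lemma prefixSet_of_le (σ : Equiv.Perm (Fin p)) {n : ℕ} (h : p ≤ n) : prefixSet σ n = univ := by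
  ext j; simpa using (σ.symm j).2.trans_le h

lemma apply_notMem_prefixSet (σ : Equiv.Perm (Fin p)) {n : ℕ} (h : n < p) :
    σ ⟨n, h⟩ ∉ prefixSet σ n := by
  simp

lemma prefixSet_succ (σ : Equiv.Perm (Fin p)) {n : ℕ} (h : n < p) :
    prefixSet σ (n + 1) = insert (σ ⟨n, h⟩) (prefixSet σ n) := by
  ext j
  rw [mem_insert, mem_prefixSet, mem_prefixSet, ← Equiv.symm_apply_eq, Fin.ext_iff,
    Nat.lt_succ_iff_lt_or_eq, or_comm]

lemma prefixSet_succ_of_le (σ : Equiv.Perm (Fin p)) {n : ℕ} (h : p ≤ n) :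
    prefixSet σ (n + 1) = prefixSet σ n := by
  rw [prefixSet_of_le σ h, prefixSet_of_le σ (h.trans n.le_succ)]

lemma image_Iic_eq_prefixSet (σ : Equiv.Perm (Fin p)) (i : Fin p) :
    (Iic i).image σ = prefixSet σ (i + 1) := by
  ext j
  rw [← σ.coe_toEmbedding, ← map_eq_image, mem_map_equiv, mem_Iic, mem_prefixSet,
    Nat.lt_succ_iff, Fin.le_def]

lemma image_Iio_eq_prefixSet (σ : Equiv.Perm (Fin p)) (i : Fin p) :
    (Iio i).image σ = prefixSet σ i := by
  ext j
  rw [← σ.coe_toEmbedding, ← map_eq_image, mem_map_equiv, mem_Iio, mem_prefixSet, Fin.lt_def]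

variable (F : Finset (Fin p) → ℝ)

def greedyWeight (σ : Equiv.Perm (Fin p)) (j : Fin p) : ℝ :=
  F (prefixSet σ (σ.symm j + 1)) - F (prefixSet σ (σ.symm j))

lemma greedyWeight_apply_self (σ : Equiv.Perm (Fin p)) {n : ℕ} (h : n < p) :
    greedyWeight F σ (σ ⟨n, h⟩) = F (insert (σ ⟨n, h⟩) (prefixSet σ n)) - F (prefixSet σ n) := by
  simp [greedyWeight, prefixSet_succ σ h]

lemma lovasz_eq_sum_mul_greedyWeight (x : Fin p → ℝ) :
    lovasz F x = ∑ j, x j * greedyWeight F (Tuple.sort fun j => -x j) j := by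
  rw [← Equiv.sum_comp (Tuple.sort fun j => -x j)]
  simp [lovasz, greedyWeight, image_Iic_eq_prefixSet, image_Iio_eq_prefixSet]

lemma sum_greedyWeight_prefixSet (σ : Equiv.Perm (Fin p)) (n : ℕ) :
    ∑ j ∈ prefixSet σ n, greedyWeight F σ j = F (prefixSet σ n) - F ∅ := by
  induction n with
  | zero => simp [prefixSet_zero]
  | succ n ih =>
    rcases lt_or_ge n p with h | h
    · rw [prefixSet_succ σ h, sum_insert (apply_notMem_prefixSet σ h), ih,
        greedyWeight_apply_self F σ h]
      ring
    · rw [prefixSet_succ_of_le σ h, ih]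

lemma sum_greedyWeight_univ (σ : Equiv.Perm (Fin p)) :
    ∑ j, greedyWeight F σ j = F univ - F ∅ := by
  simpa [prefixSet_of_le σ le_rfl] using sum_greedyWeight_prefixSet F σ p

variable {F}

lemma sum_greedyWeight_le (hF : IsSubmodular F) (σ : Equiv.Perm (Fin p)) (A : Finset (Fin p)) :
    ∑ j ∈ A, greedyWeight F σ j ≤ F A - F ∅ := by
  suffices key : ∀ n, ∑ j ∈ A ∩ prefixSet σ n, greedyWeight F σ j ≤ F (A ∩ prefixSet σ n) - F ∅ by
    simpa [prefixSet_of_le σ le_rfl] using key p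
  intro n
  induction n with
  | zero => simp [prefixSet_zero]
  | succ n ih =>
    rcases lt_or_ge n p with h | h
    · rw [prefixSet_succ σ h]
      by_cases hA : σ ⟨n, h⟩ ∈ A
      · have hnotMem : σ ⟨n, h⟩ ∉ A ∩ prefixSet σ n :=
          fun hmem => apply_notMem_prefixSet σ h (mem_inter.1 hmem).2
        have hgain := hF.sub_le_sub_of_subset (B := A ∩ prefixSet σ n)
          inter_subset_right (apply_notMem_prefixSet σ h)
        rw [inter_insert_of_mem hA, sum_insert hnotMem, greedyWeight_apply_self F σ h]
        linarith
      · rwa [inter_insert_of_notMem hA]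
    · rwa [prefixSet_succ_of_le σ h]

lemma sum_mul_le_mul_sum_prefixSet (τ : Equiv.Perm (Fin p)) {x d : Fin p → ℝ}
    (hx : Antitone (x ∘ τ)) (hd : ∀ n, ∑ j ∈ prefixSet τ n, d j ≤ 0) (n : ℕ) {m : ℝ}
    (hm : ∀ j ∈ prefixSet τ n, m ≤ x j) :
    ∑ j ∈ prefixSet τ n, x j * d j ≤ m * ∑ j ∈ prefixSet τ n, d j := by
  induction n generalizing m with
  | zero => simp [prefixSet_zero]
  | succ n ih =>
    rcases lt_or_ge n p with h | h
    · have hj₀ : ∀ j ∈ prefixSet τ n, x (τ ⟨n, h⟩) ≤ x j := fun j hj => by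
        simpa using hx (show τ.symm j ≤ ⟨n, h⟩ from Fin.le_def.2 (mem_prefixSet.1 hj).le)
      have hm₀ : m ≤ x (τ ⟨n, h⟩) := hm _ (by simp [prefixSet_succ τ h])
      have hsum := hd (n + 1)
      simp only [prefixSet_succ τ h, sum_insert (apply_notMem_prefixSet τ h)] at hsum ⊢
      calc x (τ ⟨n, h⟩) * d (τ ⟨n, h⟩) + ∑ j ∈ prefixSet τ n, x j * d j
          ≤ x (τ ⟨n, h⟩) * (d (τ ⟨n, h⟩) + ∑ j ∈ prefixSet τ n, d j) := by
            linarith [ih hj₀]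
        _ ≤ m * (d (τ ⟨n, h⟩) + ∑ j ∈ prefixSet τ n, d j) :=
            mul_le_mul_of_nonpos_right hm₀ hsum
    · rw [prefixSet_succ_of_le τ h] at hm ⊢
      exact ih hm

theorem sum_mul_greedyWeight_le_lovasz (hF : IsSubmodular F) (σ : Equiv.Perm (Fin p))
    (x : Fin p → ℝ) :
    ∑ j, x j * greedyWeight F σ j ≤ lovasz F x := by
  set τ := Tuple.sort fun j => -x j
  have hx : Antitone (x ∘ τ) := fun i j hij => by
    simpa using Tuple.monotone_sort (fun j => -x j) hij
  have hd : ∀ n, ∑ j ∈ prefixSet τ n, (greedyWeight F σ j - greedyWeight F τ j) ≤ 0 := fun n => by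
    rw [sum_sub_distrib, sum_greedyWeight_prefixSet]
    linarith [sum_greedyWeight_le hF σ (prefixSet τ n)]
  obtain ⟨m, hm⟩ := (Set.finite_range x).bddBelow
  have habel := sum_mul_le_mul_sum_prefixSet τ hx hd p (m := m) fun j _ => hm ⟨j, rfl⟩
  have htotal : ∑ j, (greedyWeight F σ j - greedyWeight F τ j) = 0 := by
    rw [sum_sub_distrib, sum_greedyWeight_univ, sum_greedyWeight_univ, sub_self]
  rw [prefixSet_of_le τ le_rfl, htotal, mul_zero] at habel
  simp only [mul_sub, sum_sub_distrib, sub_nonpos] at habel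
  rwa [lovasz_eq_sum_mul_greedyWeight]

theorem convexOn_lovasz (hF : IsSubmodular F) : ConvexOn ℝ Set.univ (lovasz F) := by
  refine ⟨convex_univ, fun x _ y _ a b ha hb _ => ?_⟩
  set w := greedyWeight F (Tuple.sort fun j => -(a • x + b • y) j)
  have hlin : lovasz F (a • x + b • y)
      = a * ∑ j, x j * w j + b * ∑ j, y j * w j := by
    simp only [lovasz_eq_sum_mul_greedyWeight, w, mul_sum, ← sum_add_distrib]
    exact sum_congr rfl fun j _ => by
      simp only [Pi.add_apply, Pi.smul_apply, smul_eq_mul]; ring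
  rw [hlin, smul_eq_mul, smul_eq_mul]
  gcongr
  · exact sum_mul_greedyWeight_le_lovasz hF _ x
  · exact sum_mul_greedyWeight_le_lovasz hF _ y

end Lovasz

theorem lovasz_convex_general {p : ℕ} (F : Finset (Fin p) → ℝ)
    (hsub : ∀ A B : Finset (Fin p), F (A ∩ B) + F (A ∪ B) ≤ F A + F B) :
    ConvexOn ℝ (Set.Icc (0 : Fin p → ℝ) 1) (lovasz F) :=
  (Lovasz.convexOn_lovasz hsub).subset (Set.subset_univ _) (convex_Icc 0 1)

/-- The Lovász extension of a submodular function (with `F ∅ = 0`) is convex on `[0,1]^p`. -/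
theorem lovasz_convex {p : ℕ} (F : Finset (Fin p) → ℝ)
    (hsub : ∀ A B : Finset (Fin p), F (A ∩ B) + F (A ∪ B) ≤ F A + F B)
    (h0 : F ∅ = 0) :
    ConvexOn ℝ (Set.Icc (0 : Fin p → ℝ) 1) (lovasz F) :=
  lovasz_convex_general F hsub
end

section
/- Foster's theorem: in a connected unweighted graph on p vertices, the sum over all edges of the effective resistances equals p − 1: Σ_{e ∈ E} r_e = p − 1. -/
/-!
Write `Δ` for the Laplacian and `L` for its pseudoinverse. Expanding the quadratic forms, the
sum of the effective resistances over ordered adjacent pairs is `2 tr(Δ L)`. From `Δ L Δ = Δ`,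
`Δ L` is idempotent with the same rank as `Δ`, and the trace of an idempotent matrix
is its rank; for a connected graph the kernel of `Δ` is the constants, so `rank Δ = p - 1`.
-/

open Matrix

namespace Matrix

theorem IsIdempotentElem.trace_eq_rank {n K : Type*} [Fintype n] [DecidableEq n] [Field K]
    {A : Matrix n n K} (hA : IsIdempotentElem A) : A.trace = A.rank := by
  rw [← trace_toLin'_eq]
  exact (LinearMap.IsIdempotentElem.isProj_range _ (hA.map toLinAlgEquiv')).trace

theorem rank_mul_eq_left_of_mul_mul_eq_self {m n R : Type*} [Fintype m] [Fintype n]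
    [CommRing R] [StrongRankCondition R] {A : Matrix m n R} {L : Matrix n m R}
    (h : A * L * A = A) : (A * L).rank = A.rank :=
  (rank_mul_le_left A L).antisymm (by simpa only [h] using rank_mul_le_left (A * L) A)

theorem trace_mul_eq_rank_of_mul_mul_eq_self {m n K : Type*} [Fintype m] [Fintype n]
    [DecidableEq m] [Field K] {A : Matrix m n K} {L : Matrix n m K} (h : A * L * A = A) :
    (A * L).trace = A.rank := by
  have hidem : IsIdempotentElem (A * L) := by
    rw [IsIdempotentElem, ← Matrix.mul_assoc, h]
  rw [hidem.trace_eq_rank, rank_mul_eq_left_of_mul_mul_eq_self h]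

theorem single_sub_single_dotProduct_mulVec {n R : Type*} [Fintype n] [DecidableEq n]
    [CommRing R] (L : Matrix n n R) (u v : n) :
    (Pi.single u 1 - Pi.single v 1) ⬝ᵥ L *ᵥ (Pi.single u 1 - Pi.single v 1)
      = L u u + L v v - L u v - L v u := by
  simp only [mulVec_sub, dotProduct_sub, sub_dotProduct, mulVec_single_one,
    single_one_dotProduct, col_apply]
  ring

end Matrix

namespace SimpleGraph

variable {V : Type*} [Fintype V] (G : SimpleGraph V) [DecidableRel G.Adj]

theorem sum_adj_eq_sum_adj_swap {M : Type*} [AddCommMonoid M] (f : V → V → M) :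
    ∑ u, ∑ v, (if G.Adj u v then f v u else 0)
      = ∑ u, ∑ v, (if G.Adj u v then f u v else 0) := by
  rw [Finset.sum_comm]
  simp_rw [G.adj_comm]

variable [DecidableEq V]

theorem rank_lapMatrix_of_connected (hG : G.Connected) :
    (G.lapMatrix ℝ).rank = Fintype.card V - 1 := by
  have hcomponents : Fintype.card G.ConnectedComponent = 1 :=
    Fintype.card_eq_one_iff.mpr ⟨G.connectedComponentMk hG.nonempty.some,
      fun _ => hG.preconnected.subsingleton_connectedComponent.elim _ _⟩
  have hker := G.card_connectedComponent_eq_finrank_ker_toLin'_lapMatrix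
  have hrank_nullity := LinearMap.finrank_range_add_finrank_ker (G.lapMatrix ℝ).toLin'
  rw [Module.finrank_fintype_fun_eq_card, ← hker, hcomponents] at hrank_nullity
  exact Nat.eq_sub_of_add_eq hrank_nullity

variable {R : Type*} [CommRing R]

theorem trace_lapMatrix_mul (L : Matrix V V R) :
    (G.lapMatrix R * L).trace = ∑ u, ∑ v, (if G.Adj u v then L u u - L v u else 0) := by
  refine Finset.sum_congr rfl fun u _ => ?_
  simp only [diag, mul_apply, lapMatrix, degMatrix, Matrix.sub_apply, diagonal_apply,
    adjMatrix_apply, sub_mul, ite_mul, zero_mul, one_mul, Finset.sum_sub_distrib,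
    Finset.sum_ite_eq, Finset.mem_univ, if_true]
  rw [G.degree_eq_sum_if_adj (R := R), Finset.sum_mul, ← Finset.sum_sub_distrib]
  refine Finset.sum_congr rfl fun v _ => ?_
  split_ifs <;> simp

theorem sum_adj_single_sub_single_dotProduct_mulVec (L : Matrix V V R) :
    ∑ u, ∑ v, (if G.Adj u v then
        (Pi.single u 1 - Pi.single v 1) ⬝ᵥ L *ᵥ (Pi.single u 1 - Pi.single v 1) else 0)
      = 2 * (G.lapMatrix R * L).trace := by
  have hsplit (u v : V) : (if G.Adj u v then L u u + L v v - L u v - L v u else 0)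
      = (if G.Adj u v then L u u - L v u else 0) + (if G.Adj u v then L v v - L u v else 0) := by
    split_ifs <;> ring
  simp only [single_sub_single_dotProduct_mulVec, hsplit, Finset.sum_add_distrib,
    G.sum_adj_eq_sum_adj_swap fun u v => L u u - L v u, trace_lapMatrix_mul]
  ring

end SimpleGraph

theorem foster_general {p : ℕ} (G : SimpleGraph (Fin p)) [DecidableRel G.Adj] (hG : G.Connected)
    (L : Matrix (Fin p) (Fin p) ℝ)
    (h1 : G.lapMatrix ℝ * L * G.lapMatrix ℝ = G.lapMatrix ℝ) :
    (1 / 2) * ∑ u : Fin p, ∑ v : Fin p,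
        (if G.Adj u v then
          (Pi.single u 1 - Pi.single v 1) ⬝ᵥ L.mulVec (Pi.single u 1 - Pi.single v 1)
        else 0)
      = (p : ℝ) - 1 := by
  have hp : 1 ≤ p := Fin.pos_iff_nonempty.mpr hG.nonempty
  rw [G.sum_adj_single_sub_single_dotProduct_mulVec, trace_mul_eq_rank_of_mul_mul_eq_self h1,
    G.rank_lapMatrix_of_connected hG, Fintype.card_fin, Nat.cast_sub hp, Nat.cast_one]
  ring

/-- Foster's theorem: in a connected unweighted graph on `p` vertices,
`Σ_{e ∈ E} r_e = p − 1`, where `r_{uv} = (δ_u − δ_v)^⊤ Δ† (δ_u − δ_v)` is the effective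
resistance (`Δ†` the Moore–Penrose pseudoinverse of the Laplacian, characterized by the
four Penrose conditions). Each edge is counted once (the ordered-pair sum is halved). -/
theorem foster {p : ℕ} (G : SimpleGraph (Fin p)) [DecidableRel G.Adj] (hG : G.Connected)
    (L : Matrix (Fin p) (Fin p) ℝ)
    (h1 : G.lapMatrix ℝ * L * G.lapMatrix ℝ = G.lapMatrix ℝ)
    (h2 : L * G.lapMatrix ℝ * L = L)
    (h3 : (G.lapMatrix ℝ * L)ᵀ = G.lapMatrix ℝ * L)
    (h4 : (L * G.lapMatrix ℝ)ᵀ = L * G.lapMatrix ℝ) :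
    (1 / 2) * ∑ u : Fin p, ∑ v : Fin p,
        (if G.Adj u v then
          (Pi.single u 1 - Pi.single v 1) ⬝ᵥ L.mulVec (Pi.single u 1 - Pi.single v 1)
        else 0)
      = (p : ℝ) - 1 :=
  foster_general G hG L h1
end

section
/- If a nonnegative random variable Z satisfies P(Z ≥ (1+δ) E Z) ≤ (e^δ/(1+δ)^{1+δ})^{E Z} for all δ > 0, then for any α ∈ (0,1), with probability at least 1 − α, Z ≤ (√(E Z) + √(log(1/α)))². -/
open MeasureTheory
open scoped ProbabilityTheory

/-! With `u = √(1 + δ)`, the inequality `u log u ≥ u - 1` turns the Chernoff exponent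
`δ - (1 + δ) log (1 + δ)` into at most `-(u - 1)²`. Choosing `u = 1 + √(log (1/α) / EZ)` makes
`(1 + δ) EZ = (√EZ + √log (1/α))²` and the tail bound at most `exp (-log (1/α)) = α`. -/

lemma Real.sub_one_le_mul_log {u : ℝ} (hu : 0 < u) : u - 1 ≤ u * Real.log u := by
  have h := mul_le_mul_of_nonneg_left (Real.one_sub_inv_le_log_of_pos hu) hu.le
  rwa [mul_sub, mul_one, mul_inv_cancel₀ hu.ne'] at h

lemma Real.chernoff_exponent_le {δ : ℝ} (hδ : -1 < δ) :
    δ - (1 + δ) * Real.log (1 + δ) ≤ -(Real.sqrt (1 + δ) - 1) ^ 2 := by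
  set u := Real.sqrt (1 + δ)
  have hu : 0 < u := Real.sqrt_pos.mpr (by linarith)
  have hu2 : u ^ 2 = 1 + δ := Real.sq_sqrt (by linarith)
  have hlog : Real.log (1 + δ) = 2 * Real.log u := by rw [← hu2, Real.log_pow]; push_cast; ring
  rw [hlog, ← hu2]
  nlinarith [mul_le_mul_of_nonneg_left (Real.sub_one_le_mul_log hu) hu.le]

lemma Real.exists_chernoff_exponent_le_neg {m L : ℝ} (hm : 0 < m) (hL : 0 < L) :
    ∃ δ > 0, (1 + δ) * m = (Real.sqrt m + Real.sqrt L) ^ 2 ∧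
      m * (δ - (1 + δ) * Real.log (1 + δ)) ≤ -L := by
  have hsm : 0 < Real.sqrt m := Real.sqrt_pos.mpr hm
  have hsL : 0 < Real.sqrt L := Real.sqrt_pos.mpr hL
  set u := 1 + Real.sqrt L / Real.sqrt m
  have hu : 1 < u := lt_add_of_pos_right 1 (div_pos hsL hsm)
  refine ⟨u ^ 2 - 1, by nlinarith, ?_, ?_⟩
  · have hu_sqrt : u * Real.sqrt m = Real.sqrt m + Real.sqrt L := by
      simp only [u, add_mul, one_mul, div_mul_cancel₀ _ hsm.ne']
    rw [add_sub_cancel, ← hu_sqrt, mul_pow, Real.sq_sqrt hm.le]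
  · have hsqrt : Real.sqrt (1 + (u ^ 2 - 1)) = u := by simp [Real.sqrt_sq (by linarith : 0 ≤ u)]
    have hmu : m * (u - 1) ^ 2 = L := by
      simp only [u, add_sub_cancel_left, div_pow, Real.sq_sqrt hm.le, Real.sq_sqrt hL.le]
      field_simp
    have h := Real.chernoff_exponent_le (δ := u ^ 2 - 1) (by nlinarith)
    rw [hsqrt] at h
    calc m * (u ^ 2 - 1 - (1 + (u ^ 2 - 1)) * Real.log (1 + (u ^ 2 - 1)))
        ≤ m * -(u - 1) ^ 2 := mul_le_mul_of_nonneg_left h hm.le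
      _ = -L := by rw [mul_neg, hmu]

lemma MeasureTheory.ofReal_one_sub_le_prob_of_prob_compl_le {Ω : Type*} [MeasurableSpace Ω]
    {μ : Measure Ω} [IsProbabilityMeasure μ] {s : Set Ω} {α : ℝ} (hα : 0 ≤ α)
    (h : μ sᶜ ≤ ENNReal.ofReal α) : ENNReal.ofReal (1 - α) ≤ μ s := by
  have hcover : 1 ≤ μ s + μ sᶜ := by simpa using measure_univ_le_add_compl (μ := μ) s
  rw [ENNReal.ofReal_sub _ hα, ENNReal.ofReal_one, tsub_le_iff_right]
  exact hcover.trans (add_le_add_right h _)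

theorem chernoff_to_quantile_general {Ω : Type*} [MeasureSpace Ω] [IsProbabilityMeasure (ℙ : Measure Ω)]
    (Z : Ω → ℝ) (hmean : 0 < ∫ ω, Z ω)
    (htail : ∀ δ : ℝ, 0 < δ →
      ℙ {ω | (1 + δ) * ∫ ω', Z ω' ≤ Z ω}
        ≤ ENNReal.ofReal (Real.exp ((∫ ω', Z ω') * (δ - (1 + δ) * Real.log (1 + δ)))))
    (α : ℝ) (hα : α ∈ Set.Ioo (0:ℝ) 1) :
    ENNReal.ofReal (1 - α)
      ≤ ℙ {ω | Z ω ≤ (Real.sqrt (∫ ω', Z ω') + Real.sqrt (Real.log (1 / α))) ^ 2} := by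
  obtain ⟨hα0, hα1⟩ := hα
  have hL : 0 < Real.log (1 / α) := Real.log_pos (one_lt_one_div hα0 hα1)
  obtain ⟨δ, hδ, hthreshold, hexponent⟩ := Real.exists_chernoff_exponent_le_neg hmean hL
  refine MeasureTheory.ofReal_one_sub_le_prob_of_prob_compl_le hα0.le ?_
  calc ℙ {ω | Z ω ≤ (Real.sqrt (∫ ω', Z ω') + Real.sqrt (Real.log (1 / α))) ^ 2}ᶜ
      ≤ ℙ {ω | (1 + δ) * ∫ ω', Z ω' ≤ Z ω} :=
        measure_mono fun ω hω => by
          rw [Set.mem_compl_iff, Set.mem_ofPred_eq, not_le, ← hthreshold] at hω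
          exact hω.le
    _ ≤ ENNReal.ofReal (Real.exp ((∫ ω', Z ω') * (δ - (1 + δ) * Real.log (1 + δ)))) := htail δ hδ
    _ ≤ ENNReal.ofReal α := by
        refine ENNReal.ofReal_le_ofReal ((Real.exp_le_exp.mpr hexponent).trans_eq ?_)
        rw [one_div, Real.log_inv, neg_neg, Real.exp_log hα0]

/-- If a nonnegative random variable with positive mean satisfies the multiplicative
Chernoff tail bound `P(Z ≥ (1+δ)EZ) ≤ exp(EZ(δ − (1+δ)log(1+δ)))` for all `δ > 0`, then
for any `α ∈ (0,1)`, with probability at least `1 − α`, `Z ≤ (√(EZ) + √(log(1/α)))²`. -/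
theorem chernoff_to_quantile {Ω : Type*} [MeasureSpace Ω] [IsProbabilityMeasure (ℙ : Measure Ω)]
    (Z : Ω → ℝ) (hZint : Integrable Z) (hZpos : ∀ ω, 0 ≤ Z ω) (hmean : 0 < ∫ ω, Z ω)
    (htail : ∀ δ : ℝ, 0 < δ →
      ℙ {ω | (1 + δ) * ∫ ω', Z ω' ≤ Z ω}
        ≤ ENNReal.ofReal (Real.exp ((∫ ω', Z ω') * (δ - (1 + δ) * Real.log (1 + δ)))))
    (α : ℝ) (hα : α ∈ Set.Ioo (0:ℝ) 1) :
    ENNReal.ofReal (1 - α)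
      ≤ ℙ {ω | Z ω ≤ (Real.sqrt (∫ ω', Z ω') + Real.sqrt (Real.log (1 / α))) ^ 2} :=
  chernoff_to_quantile_general Z hmean htail α hα
end

section
/- Strong duality for the LESS inner program: for y ∈ ℝ^p, ρ ≥ 0, t ≥ 1, max{ y^⊤x : x ∈ [0,1]^p, ‖(∇x)_+‖_1 ≤ ρ, 1^⊤x ≤ t } = inf_{η_0, η_1 ≥ 0} [ max_{x ∈ {0,1}^p} ( y^⊤x − η_0 1^⊤x − η_1 ‖(∇x)_+‖_1 ) + η_0 t + η_1 ρ ]. -/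
/-- `out C` : total weight of edges with tail in `C` and head outside `C`. -/
noncomputable def outWeight {p : ℕ} (E : Finset (Fin p × Fin p)) (W : Fin p × Fin p → ℝ)
    (C : Finset (Fin p)) : ℝ :=
  ∑ e ∈ E, if e.1 ∈ C ∧ e.2 ∉ C then W e else 0

/-- `‖(∇x)_+‖_1 = Σ_e W_e max(x_tail − x_head, 0)`, the Lovász extension of `out`. -/
noncomputable def cutNorm {p : ℕ} (E : Finset (Fin p × Fin p)) (W : Fin p × Fin p → ℝ)
    (x : Fin p → ℝ) : ℝ :=
  ∑ e ∈ E, W e * max (x e.1 - x e.2) 0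

/-!
Weak duality rests on the level-set formula for the Lovász extension: for `x ∈ [0,1]^p` and the
threshold sets `C_θ = {i | θ ≤ x i}`, the quantities `y^⊤x`, `1^⊤x` and `‖(∇x)_+‖_1` are the
averages over `θ ∈ [0,1]` of `y(C_θ)`, `|C_θ|` and `out(C_θ)`. Hence the Lagrangian at `x` is an
average of its values at binary points and is bounded by their maximum.

Conversely, a convex combination `Σ_c μ_c 1_c` of binary points is feasible as soon as the
averages of `|c|` and `out(c)` are within `t` and `ρ`, because the cut norm is convex and
positively homogeneous. So the compact convex set of triples
`(Σ μ_c y(c), Σ μ_c (t - |c|), Σ μ_c (ρ - out c))` misses the closed orthant above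
`(P + ε, 0, 0)`, where `P` is the primal value. A separating hyperplane has a positive first
coefficient, because the empty set is feasible; normalized, its other two coefficients are the
multipliers.
-/

open Finset MeasureTheory

lemma ite_le_eq_indicator (a c : ℝ) :
    (fun θ : ℝ => if θ ≤ a then c else 0) = Set.indicator {θ | θ ≤ a} (fun _ => c) := by
  ext θ; simp [Set.indicator_apply]

lemma intervalIntegrable_ite_le (a c : ℝ) :
    IntervalIntegrable (fun θ : ℝ => if θ ≤ a then c else 0) volume 0 1 := by
  rw [ite_le_eq_indicator, intervalIntegrable_iff]
  exact (integrableOn_const (by simp) (by simp)).indicator measurableSet_Iic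

lemma integral_ite_le {a : ℝ} (ha : a ∈ Set.Icc (0 : ℝ) 1) (c : ℝ) :
    ∫ θ in (0 : ℝ)..1, (if θ ≤ a then c else 0) = c * a := by
  rw [ite_le_eq_indicator, intervalIntegral.integral_indicator ha]
  simp [mul_comm]

lemma ite_le_and_not_le_eq (θ a b c : ℝ) :
    (if θ ≤ a ∧ ¬θ ≤ b then c else 0) =
      (if θ ≤ a then c else 0) - (if θ ≤ min a b then c else 0) := by
  simp only [le_min_iff]
  split_ifs <;> simp_all

lemma intervalIntegrable_ite_le_and_not_le (a b c : ℝ) :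
    IntervalIntegrable (fun θ : ℝ => if θ ≤ a ∧ ¬θ ≤ b then c else 0) volume 0 1 := by
  simp only [ite_le_and_not_le_eq]
  exact (intervalIntegrable_ite_le a c).sub (intervalIntegrable_ite_le _ c)

lemma integral_ite_le_and_not_le {a b : ℝ} (ha : a ∈ Set.Icc (0 : ℝ) 1)
    (hb : b ∈ Set.Icc (0 : ℝ) 1) (c : ℝ) :
    ∫ θ in (0 : ℝ)..1, (if θ ≤ a ∧ ¬θ ≤ b then c else 0) = c * max (a - b) 0 := by
  have hmin : min a b ∈ Set.Icc (0 : ℝ) 1 := ⟨le_min ha.1 hb.1, (min_le_left a b).trans ha.2⟩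
  simp only [ite_le_and_not_le_eq]
  rw [intervalIntegral.integral_sub (intervalIntegrable_ite_le a c) (intervalIntegrable_ite_le _ c),
    integral_ite_le ha, integral_ite_le hmin, ← mul_sub, ← max_sub_sub_left, sub_self, max_comm]

section LevelSets

variable {p : ℕ} {x : Fin p → ℝ}

lemma sum_levelSet (y : Fin p → ℝ) (θ : ℝ) :
    ∑ i ∈ {i | θ ≤ x i}, y i = ∑ i, if θ ≤ x i then y i else 0 :=
  sum_filter _ _

lemma intervalIntegrable_sum_levelSet (y : Fin p → ℝ) :
    IntervalIntegrable (fun θ => ∑ i ∈ {i | θ ≤ x i}, y i) volume 0 1 := by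
  simp only [sum_levelSet]
  simpa only [Finset.sum_fn] using
    IntervalIntegrable.sum univ fun i _ => intervalIntegrable_ite_le (x i) (y i)

lemma integral_sum_levelSet (hx : x ∈ Set.Icc 0 1) (y : Fin p → ℝ) :
    ∫ θ in (0 : ℝ)..1, ∑ i ∈ {i | θ ≤ x i}, y i = ∑ i, y i * x i := by
  simp only [sum_levelSet]
  rw [intervalIntegral.integral_finsetSum fun i _ => intervalIntegrable_ite_le _ _]
  exact sum_congr rfl fun i _ => integral_ite_le ⟨hx.1 i, hx.2 i⟩ (y i)

lemma intervalIntegrable_card_levelSet :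
    IntervalIntegrable (fun θ => (#{i | θ ≤ x i} : ℝ)) volume 0 1 := by
  simpa only [cast_card] using intervalIntegrable_sum_levelSet (x := x) fun _ => 1

lemma integral_card_levelSet (hx : x ∈ Set.Icc 0 1) :
    ∫ θ in (0 : ℝ)..1, (#{i | θ ≤ x i} : ℝ) = ∑ i, x i := by
  simpa only [cast_card, Pi.one_apply, one_mul] using integral_sum_levelSet hx 1

variable (E : Finset (Fin p × Fin p)) (W : Fin p × Fin p → ℝ)

lemma outWeight_levelSet (θ : ℝ) :
    outWeight E W {i | θ ≤ x i} = ∑ e ∈ E, if θ ≤ x e.1 ∧ ¬θ ≤ x e.2 then W e else 0 := by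
  simp [outWeight]

lemma intervalIntegrable_outWeight_levelSet :
    IntervalIntegrable (fun θ => outWeight E W {i | θ ≤ x i}) volume 0 1 := by
  simp only [outWeight_levelSet]
  simpa only [Finset.sum_fn] using
    IntervalIntegrable.sum E fun e _ => intervalIntegrable_ite_le_and_not_le (x e.1) (x e.2) (W e)

lemma integral_outWeight_levelSet (hx : x ∈ Set.Icc 0 1) :
    ∫ θ in (0 : ℝ)..1, outWeight E W {i | θ ≤ x i} = cutNorm E W x := by
  simp only [outWeight_levelSet]
  rw [intervalIntegral.integral_finsetSum fun e _ => intervalIntegrable_ite_le_and_not_le _ _ _]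
  exact sum_congr rfl fun e _ =>
    integral_ite_le_and_not_le ⟨hx.1 e.1, hx.2 e.1⟩ ⟨hx.1 e.2, hx.2 e.2⟩ (W e)

theorem lagrangian_le_sup' (hx : x ∈ Set.Icc 0 1) (y : Fin p → ℝ) (η₀ η₁ : ℝ) :
    (∑ i, y i * x i) - η₀ * (∑ i, x i) - η₁ * cutNorm E W x ≤
      univ.sup' univ_nonempty
        (fun c : Finset (Fin p) => (∑ i ∈ c, y i) - η₀ * #c - η₁ * outWeight E W c) := by
  set g := fun c : Finset (Fin p) => (∑ i ∈ c, y i) - η₀ * #c - η₁ * outWeight E W c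
  have hy := intervalIntegrable_sum_levelSet (x := x) y
  have hc := (intervalIntegrable_card_levelSet (x := x)).const_mul η₀
  have ho := (intervalIntegrable_outWeight_levelSet (x := x) E W).const_mul η₁
  calc (∑ i, y i * x i) - η₀ * (∑ i, x i) - η₁ * cutNorm E W x
      = ∫ θ in (0 : ℝ)..1, g {i | θ ≤ x i} := by
        rw [intervalIntegral.integral_sub (hy.sub hc) ho, intervalIntegral.integral_sub hy hc,
          intervalIntegral.integral_const_mul, intervalIntegral.integral_const_mul,
          integral_sum_levelSet hx, integral_card_levelSet hx, integral_outWeight_levelSet E W hx]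
    _ ≤ ∫ θ in (0 : ℝ)..1, univ.sup' univ_nonempty g :=
        intervalIntegral.integral_mono_on zero_le_one ((hy.sub hc).sub ho) intervalIntegrable_const
          fun θ _ => le_sup' g (mem_univ _)
    _ = univ.sup' univ_nonempty g := by simp

end LevelSets

section Mixtures

variable {p : ℕ} (E : Finset (Fin p × Fin p)) (W : Fin p × Fin p → ℝ)

lemma cutNorm_indicator (c : Finset (Fin p)) :
    cutNorm E W ((c : Set (Fin p)).indicator 1) = outWeight E W c := by
  refine sum_congr rfl fun e _ => ?_
  by_cases h₁ : e.1 ∈ c <;> by_cases h₂ : e.2 ∈ c <;> simp [h₁, h₂]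

lemma max_sum_mul_le {ι : Type*} (s : Finset ι) {μ : ι → ℝ} (hμ : ∀ i ∈ s, 0 ≤ μ i)
    (a : ι → ℝ) :
    max (∑ i ∈ s, μ i * a i) 0 ≤ ∑ i ∈ s, μ i * max (a i) 0 :=
  max_le (sum_le_sum fun i hi => mul_le_mul_of_nonneg_left (le_max_left _ _) (hμ i hi))
    (sum_nonneg fun i hi => mul_nonneg (hμ i hi) (le_max_right _ _))

lemma cutNorm_sum_smul_le (hW : ∀ e ∈ E, 0 ≤ W e) {ι : Type*} (s : Finset ι) {μ : ι → ℝ}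
    (hμ : ∀ i ∈ s, 0 ≤ μ i) (z : ι → Fin p → ℝ) :
    cutNorm E W (∑ i ∈ s, μ i • z i) ≤ ∑ i ∈ s, μ i * cutNorm E W (z i) := by
  simp only [cutNorm, mul_sum]
  rw [sum_comm]
  refine sum_le_sum fun e he => ?_
  calc W e * max ((∑ i ∈ s, μ i • z i) e.1 - (∑ i ∈ s, μ i • z i) e.2) 0
      = W e * max (∑ i ∈ s, μ i * (z i e.1 - z i e.2)) 0 := by
        simp [Finset.sum_apply, mul_sub, sum_sub_distrib]
    _ ≤ W e * ∑ i ∈ s, μ i * max (z i e.1 - z i e.2) 0 :=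
        mul_le_mul_of_nonneg_left (max_sum_mul_le s hμ _) (hW e he)
    _ = ∑ i ∈ s, μ i * (W e * max (z i e.1 - z i e.2) 0) := by
        rw [mul_sum]; exact sum_congr rfl fun i _ => by ring

lemma sum_mul_sum_smul_indicator (y : Fin p → ℝ) (μ : Finset (Fin p) → ℝ) :
    ∑ i, y i * (∑ c, μ c • (c : Set (Fin p)).indicator 1) i = ∑ c, μ c * ∑ i ∈ c, y i := by
  simp only [Finset.sum_apply, Pi.smul_apply, smul_eq_mul, Set.indicator_apply, mem_coe,
    Pi.one_apply, mul_ite, mul_one, mul_zero, mul_sum]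
  rw [sum_comm]
  refine sum_congr rfl fun c _ => ?_
  rw [← sum_filter, filter_mem_eq_inter, univ_inter]
  exact sum_congr rfl fun i _ => mul_comm _ _

lemma sum_smul_indicator_mem_Icc {μ : Finset (Fin p) → ℝ}
    (hμ : μ ∈ stdSimplex ℝ (Finset (Fin p))) :
    ∑ c, μ c • (c : Set (Fin p)).indicator 1 ∈ Set.Icc (0 : Fin p → ℝ) 1 := by
  have hind : ∀ (c : Finset (Fin p)) i, (c : Set (Fin p)).indicator (1 : Fin p → ℝ) i ∈
      Set.Icc (0 : ℝ) 1 := fun c i => by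
    by_cases h : i ∈ c <;> simp [h]
  refine ⟨fun i => ?_, fun i => ?_⟩
  · rw [Pi.zero_apply, Finset.sum_apply]
    exact sum_nonneg fun c _ => mul_nonneg (hμ.1 c) (hind c i).1
  · rw [Pi.one_apply, Finset.sum_apply, ← hμ.2]
    exact sum_le_sum fun c _ => mul_le_of_le_one_right (hμ.1 c) (hind c i).2

end Mixtures

lemma nonneg_of_forall_lt_add_mul {v c β : ℝ} (h : ∀ N : ℝ, 0 ≤ N → v < c + N * β) :
    0 ≤ β := by
  by_contra! hβ
  have := h (|c - v| / -β) (div_nonneg (abs_nonneg _) (neg_nonneg.2 hβ.le))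
  rw [div_mul_eq_mul_div, div_neg, mul_div_cancel_right₀ _ hβ.ne] at this
  linarith [le_abs_self (c - v)]

lemma ContinuousLinearMap.apply_triple (f : ℝ × ℝ × ℝ →L[ℝ] ℝ) (u v w : ℝ) :
    f (u, v, w) = u * f (1, 0, 0) + v * f (0, 1, 0) + w * f (0, 0, 1) := by
  have : ((u, v, w) : ℝ × ℝ × ℝ) = u • (1, 0, 0) + v • (0, 1, 0) + w • (0, 0, 1) := by simp
  rw [this, map_add, map_add, map_smul, map_smul, map_smul, smul_eq_mul, smul_eq_mul, smul_eq_mul]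

theorem exists_multipliers_of_stdSimplex {ι : Type*} [Fintype ι] (a b d : ι → ℝ)
    {t ρ P ε : ℝ} (hε : 0 < ε) {i₀ : ι} (hb₀ : b i₀ ≤ t) (hd₀ : d i₀ ≤ ρ)
    (hP : ∀ μ ∈ stdSimplex ℝ ι, ∑ i, μ i * b i ≤ t → ∑ i, μ i * d i ≤ ρ → ∑ i, μ i * a i ≤ P) :
    ∃ η₀ η₁ : ℝ, 0 ≤ η₀ ∧ 0 ≤ η₁ ∧
      ∀ i, a i - η₀ * b i - η₁ * d i + η₀ * t + η₁ * ρ < P + ε := by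
  classical
  let Φ : (ι → ℝ) → ℝ × ℝ × ℝ := fun μ =>
    (∑ i, μ i * a i, ∑ i, μ i * (t - b i), ∑ i, μ i * (ρ - d i))
  have hΦlin : IsLinearMap ℝ Φ :=
    ⟨fun μ ν => by simp [Φ, add_mul, sum_add_distrib],
      fun c μ => by simp [Φ, mul_assoc, ← mul_sum]⟩
  have hΦsingle : ∀ i, Φ (Pi.single i 1) = (a i, t - b i, ρ - d i) := fun i => by
    simp [Φ, Pi.single_apply]
  let Q : Set (ℝ × ℝ × ℝ) := Set.Ici (P + ε) ×ˢ Set.Ici 0 ×ˢ Set.Ici 0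
  have hdisj : Disjoint (Φ '' stdSimplex ℝ ι) Q := by
    rw [Set.disjoint_left]
    rintro _ ⟨μ, hμ, rfl⟩ ⟨ha, hb, hd⟩
    simp only [Φ, Set.mem_Ici, mul_sub, sum_sub_distrib, ← sum_mul, hμ.2, one_mul,
      sub_nonneg] at ha hb hd
    linarith [hP μ hμ hb hd]
  obtain ⟨f, u, v, hfT, huv, hfQ⟩ := geometric_hahn_banach_compact_closed
    ((convex_stdSimplex ℝ ι).is_linear_image hΦlin)
    ((isCompact_stdSimplex ℝ ι).image (by fun_prop))
    ((convex_Ici _).prod ((convex_Ici _).prod (convex_Ici _)))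
    (isClosed_Ici.prod (isClosed_Ici.prod isClosed_Ici)) hdisj
  set α := f (1, 0, 0)
  set β := f (0, 1, 0)
  set γ := f (0, 0, 1)
  have hQ : ∀ N₀ N₁ : ℝ, 0 ≤ N₀ → 0 ≤ N₁ → v < (P + ε) * α + N₀ * β + N₁ * γ :=
    fun N₀ N₁ h₀ h₁ => f.apply_triple _ _ _ ▸ hfQ _ ⟨Set.mem_Ici.2 le_rfl, h₀, h₁⟩
  have hβ : 0 ≤ β := nonneg_of_forall_lt_add_mul fun N hN => by simpa using hQ N 0 hN le_rfl
  have hγ : 0 ≤ γ := nonneg_of_forall_lt_add_mul fun N hN => by simpa using hQ 0 N le_rfl hN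
  have hvert : ∀ i, a i * α + (t - b i) * β + (ρ - d i) * γ < (P + ε) * α := fun i => by
    have := hfT _ ⟨_, single_mem_stdSimplex ℝ i, rfl⟩
    rw [hΦsingle, f.apply_triple] at this
    linarith [hQ 0 0 le_rfl le_rfl]
  have ha₀ : a i₀ ≤ P := by
    simpa [Pi.single_apply] using hP _ (single_mem_stdSimplex ℝ i₀)
      (by simpa [Pi.single_apply] using hb₀) (by simpa [Pi.single_apply] using hd₀)
  have hα : 0 < α := by
    nlinarith [hvert i₀, mul_nonneg (sub_nonneg.2 hb₀) hβ, mul_nonneg (sub_nonneg.2 hd₀) hγ]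
  refine ⟨β / α, γ / α, div_nonneg hβ hα.le, div_nonneg hγ hα.le, fun i => ?_⟩
  have hscale : (a i - β / α * b i - γ / α * d i + β / α * t + γ / α * ρ) * α =
      a i * α + (t - b i) * β + (ρ - d i) * γ := by
    field_simp; ring
  exact lt_of_mul_lt_mul_right (hscale ▸ hvert i) hα.le

section Duality

variable {p : ℕ} (E : Finset (Fin p × Fin p)) (W : Fin p × Fin p → ℝ) (y : Fin p → ℝ) (ρ t : ℝ)

def primalValues : Set ℝ :=
  {v : ℝ | ∃ x : Fin p → ℝ, x ∈ Set.Icc 0 1 ∧ cutNorm E W x ≤ ρ ∧ (∑ i, x i) ≤ t ∧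
    v = ∑ i, y i * x i}

noncomputable def dualObjective (η₀ η₁ : ℝ) : ℝ :=
  univ.sup' univ_nonempty
    (fun c : Finset (Fin p) => (∑ i ∈ c, y i) - η₀ * c.card - η₁ * outWeight E W c)
    + η₀ * t + η₁ * ρ

variable {E W y ρ t}

theorem sum_mul_le_dualObjective {x : Fin p → ℝ} (hx : x ∈ Set.Icc 0 1)
    (hcut : cutNorm E W x ≤ ρ) (hsum : ∑ i, x i ≤ t) {η₀ η₁ : ℝ} (h₀ : 0 ≤ η₀) (h₁ : 0 ≤ η₁) :
    ∑ i, y i * x i ≤ dualObjective E W y ρ t η₀ η₁ := by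
  have := lagrangian_le_sup' E W hx y η₀ η₁
  unfold dualObjective
  linarith [mul_le_mul_of_nonneg_left hsum h₀, mul_le_mul_of_nonneg_left hcut h₁]

theorem sum_mul_sum_mem_primalValues (hW : ∀ e ∈ E, 0 ≤ W e) {μ : Finset (Fin p) → ℝ}
    (hμ : μ ∈ stdSimplex ℝ (Finset (Fin p))) (hcard : ∑ c, μ c * #c ≤ t)
    (hout : ∑ c, μ c * outWeight E W c ≤ ρ) :
    ∑ c, μ c * ∑ i ∈ c, y i ∈ primalValues E W y ρ t := by
  refine ⟨∑ c, μ c • (c : Set (Fin p)).indicator 1, sum_smul_indicator_mem_Icc hμ, ?_, ?_,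
    (sum_mul_sum_smul_indicator y μ).symm⟩
  · calc cutNorm E W (∑ c, μ c • (c : Set (Fin p)).indicator 1)
        ≤ ∑ c, μ c * cutNorm E W ((c : Set (Fin p)).indicator 1) :=
          cutNorm_sum_smul_le E W hW univ (fun c _ => hμ.1 c) _
      _ ≤ ρ := by simpa only [cutNorm_indicator] using hout
  · have hsum := sum_mul_sum_smul_indicator (fun _ => 1) μ
    simp only [one_mul, sum_const, nsmul_eq_mul, mul_one] at hsum
    exact hsum.trans_le hcard

theorem sSup_primalValues_eq_sInf_dualObjective (hW : ∀ e ∈ E, 0 ≤ W e) (hρ : 0 ≤ ρ)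
    (ht : 0 ≤ t) :
    sSup (primalValues E W y ρ t) =
      sInf {v | ∃ η₀ η₁ : ℝ, 0 ≤ η₀ ∧ 0 ≤ η₁ ∧ v = dualObjective E W y ρ t η₀ η₁} := by
  set D := {v | ∃ η₀ η₁ : ℝ, 0 ≤ η₀ ∧ 0 ≤ η₁ ∧ v = dualObjective E W y ρ t η₀ η₁}
  have weak : ∀ v ∈ primalValues E W y ρ t, ∀ w ∈ D, v ≤ w := by
    rintro _ ⟨x, hx, hcut, hsum, rfl⟩ _ ⟨η₀, η₁, h₀, h₁, rfl⟩
    exact sum_mul_le_dualObjective hx hcut hsum h₀ h₁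
  have zero_mem : (0 : ℝ) ∈ primalValues E W y ρ t :=
    ⟨0, Set.left_mem_Icc.2 zero_le_one, by simpa [cutNorm] using hρ, by simpa using ht, by simp⟩
  have dual_mem : dualObjective E W y ρ t 0 0 ∈ D := ⟨0, 0, le_rfl, le_rfl, rfl⟩
  refine le_antisymm (csSup_le ⟨0, zero_mem⟩ fun v hv => le_csInf ⟨_, dual_mem⟩ (weak v hv)) ?_
  refine le_of_forall_pos_le_add fun ε hε => ?_
  obtain ⟨η₀, η₁, h₀, h₁, hlt⟩ := exists_multipliers_of_stdSimplex (fun c => ∑ i ∈ c, y i)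
    (fun c => (#c : ℝ)) (outWeight E W) hε (i₀ := ∅) (by simpa using ht)
    (by simpa [outWeight] using hρ) fun μ hμ hcard hout =>
      le_csSup ⟨_, fun v hv => weak v hv _ dual_mem⟩ (sum_mul_sum_mem_primalValues hW hμ hcard hout)
  refine (csInf_le ⟨0, fun w hw => weak 0 zero_mem w hw⟩ ⟨η₀, η₁, h₀, h₁, rfl⟩).trans ?_
  rw [dualObjective, ← le_sub_iff_add_le, ← le_sub_iff_add_le]
  exact sup'_le _ _ fun c _ => by linarith [hlt c]

end Duality

/-- Strong duality for the LESS inner program: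
`max{ y^⊤x : x ∈ [0,1]^p, ‖(∇x)_+‖_1 ≤ ρ, 1^⊤x ≤ t }
  = inf_{η₀,η₁ ≥ 0} [ max_{x ∈ {0,1}^p} (y^⊤x − η₀ 1^⊤x − η₁ out(x)) + η₀ t + η₁ ρ ]`. -/
theorem less_strong_duality {p : ℕ} (E : Finset (Fin p × Fin p)) (W : Fin p × Fin p → ℝ)
    (hW : ∀ e, 0 ≤ W e) (y : Fin p → ℝ) (ρ t : ℝ) (hρ : 0 ≤ ρ) (ht : 1 ≤ t) :
    sSup {v : ℝ | ∃ x : Fin p → ℝ, x ∈ Set.Icc 0 1 ∧ cutNorm E W x ≤ ρ ∧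
        (∑ i, x i) ≤ t ∧ v = ∑ i, y i * x i}
      = sInf {v : ℝ | ∃ η₀ η₁ : ℝ, 0 ≤ η₀ ∧ 0 ≤ η₁ ∧
          v = (Finset.univ.sup' Finset.univ_nonempty
                (fun c : Finset (Fin p) =>
                  (∑ i ∈ c, y i) - η₀ * c.card - η₁ * outWeight E W c))
              + η₀ * t + η₁ * ρ} :=
  sSup_primalValues_eq_sInf_dualObjective (fun e _ => hW e) hρ (zero_le_one.trans ht)
end
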